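/- arXiv:2302.01583 — 5 statements merged into one kernel-verified Lean document; each statement's English description precedes it below -/
import Mathlib

section
/- Let X be any topological space. If M ⊆ Π₁(X) is open in the CO' (quotient) topology and [α] ∈ M, then there exist open neighbourhoods U of α(1) and V of α(0) in X such that N([α],U,V) ⊆ M. (In other words, the CO' topology on Π₁(X) is coarser than the UC topology generated by the sets N([γ],U,V).) -/
open unitInterval

noncomputable section

variable {X : Type*} [TopologicalSpace X]

/-- The path-homotopy (homotopy relative to `{0,1}`) relation on `C(I, X)`. -/
def pRel (f g : C(I, X)) : Prop := f.HomotopicRel g {0, 1}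

/-- The path-homotopy setoid on `C(I, X)`. -/
def pSetoid (X : Type*) [TopologicalSpace X] : Setoid C(I, X) :=
  ⟨pRel, ContinuousMap.HomotopicRel.equivalence⟩

/-- The fundamental groupoid `Π₁(X)` as the quotient of the path space `P(X) = C(I, X)`
(with the compact-open topology) by path homotopy; it carries the quotient (CO') topology. -/
abbrev Pi1 (X : Type*) [TopologicalSpace X] := Quotient (pSetoid X)

/-- The quotient map `q : P(X) → Π₁(X)`. -/
def pq : C(I, X) → Pi1 X := Quotient.mk (pSetoid X)

theorem pRel.endpts {f g : C(I, X)} (h : pRel f g) {t : I} (ht : t ∈ ({0, 1} : Set I)) :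
    f t = g t := h.some.fst_eq_snd ht

/-- The source map `s : Π₁(X) → X`, `[γ] ↦ γ(0)`. -/
def srcMap : Pi1 X → X :=
  Quotient.lift (fun f : C(I, X) => f 0) fun _ _ h =>
    pRel.endpts h (by simp)

/-- The range map `r : Π₁(X) → X`, `[γ] ↦ γ(1)`. -/
def rngMap : Pi1 X → X :=
  Quotient.lift (fun f : C(I, X) => f 1) fun _ _ h =>
    pRel.endpts h (by simp)

/-- A continuous map `I → X` regarded as a `Path` between its endpoints. -/
def toPath (f : C(I, X)) : Path (f 0) (f 1) := ⟨f, rfl, rfl⟩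

/-- Concatenation `α ⧠ β` of paths: traverse `β` first and then `α`
(given `β 1 = α 0`). -/
def concat (α β : C(I, X)) (h : β 1 = α 0) : C(I, X) :=
  ((toPath β).trans ((toPath α).cast h rfl)).toContinuousMap

@[simp] theorem concat_zero (α β : C(I, X)) (h : β 1 = α 0) : concat α β h 0 = β 0 :=
  ((toPath β).trans ((toPath α).cast h rfl)).source

@[simp] theorem concat_one (α β : C(I, X)) (h : β 1 = α 0) : concat α β h 1 = α 1 :=
  ((toPath β).trans ((toPath α).cast h rfl)).target

/-- The set `N([γ], U, V) = {[δ ⧠ γ ⧠ θ] : δ a path in U with δ 0 = γ 1,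
θ a path in V with θ 1 = γ 0}` in `Π₁(X)`. -/
def Nhd (a : Pi1 X) (U V : Set X) : Set (Pi1 X) :=
  { b | ∃ (γ δ θ : C(I, X)) (h₁ : θ 1 = γ 0) (h₂ : γ 1 = δ 0),
      pq γ = a ∧ Set.range δ ⊆ U ∧ Set.range θ ⊆ V ∧
      b = pq (concat δ (concat γ θ h₁) ((concat_one γ θ h₁).trans h₂)) }

/-- A subset `U ⊆ X` is relatively inessential in `X` if every loop in `U` is
null-homotopic (path-homotopic to a constant path) in `X`. -/
def RelInessential (X : Type*) [TopologicalSpace X] (U : Set X) : Prop :=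
  ∀ γ : C(I, X), Set.range γ ⊆ U → γ 1 = γ 0 →
    pRel γ (ContinuousMap.const I (γ 0))

/-- `X` is semilocally simply connected if every point has a relatively inessential
open neighbourhood. -/
def SemilocSimplyConnected (X : Type*) [TopologicalSpace X] : Prop :=
  ∀ x : X, ∃ U : Set X, IsOpen U ∧ x ∈ U ∧ RelInessential X U


/-- A path applied to two points of `I` with the same coordinate gives the same value. -/
lemma path_apply_eq {a b : X} (P : Path a b) {s u : I} (h : (s : ℝ) = (u : ℝ)) :
    P s = P u := by
  congr 1
  exact Subtype.ext h

/-- pointwise value of a double concatenation on `[0, 1/4]`. -/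
lemma trans_trans_left {w x y z : X} (p : Path w x) (q : Path x y) (r : Path y z)
    (t : I) (ht : (t : ℝ) ≤ 1/4) :
    ((p.trans q).trans r) t =
      p ⟨4 * (t : ℝ), ⟨by nlinarith [t.2.1], by nlinarith [t.2.1]⟩⟩ := by
  have h2 : (t : ℝ) ≤ 1/2 := by linarith
  rw [Path.trans_apply, dif_pos h2, Path.trans_apply]
  rw [dif_pos (show ((⟨2 * (t : ℝ), _⟩ : I) : ℝ) ≤ 1/2 by dsimp; linarith)]
  congr 1
  ext
  dsimp
  ring

/-- pointwise value of a double concatenation on `[1/4, 1/2]`. -/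
lemma trans_trans_mid {w x y z : X} (p : Path w x) (q : Path x y) (r : Path y z)
    (t : I) (ht : 1/4 ≤ (t : ℝ)) (ht' : (t : ℝ) ≤ 1/2) :
    ((p.trans q).trans r) t =
      q ⟨4 * (t : ℝ) - 1, ⟨by linarith, by linarith⟩⟩ := by
  rw [Path.trans_apply, dif_pos ht']
  rcases eq_or_lt_of_le ht with heq | hlt
  · rw [Path.trans_apply,
      dif_pos (show ((⟨2 * (t : ℝ), _⟩ : I) : ℝ) ≤ 1/2 by dsimp; linarith)]
    calc p _ = p 1 := path_apply_eq p (by dsimp; linarith)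
      _ = q 0 := by rw [p.target, q.source]
      _ = q _ := path_apply_eq q (by dsimp; linarith)
  · rw [Path.trans_apply,
      dif_neg (show ¬ ((⟨2 * (t : ℝ), _⟩ : I) : ℝ) ≤ 1/2 by dsimp; push_neg; linarith)]
    congr 1
    ext
    dsimp
    ring

/-- pointwise value of a double concatenation on `[1/2, 1]`. -/
lemma trans_trans_right {w x y z : X} (p : Path w x) (q : Path x y) (r : Path y z)
    (t : I) (ht : 1/2 ≤ (t : ℝ)) :
    ((p.trans q).trans r) t =
      r ⟨2 * (t : ℝ) - 1, ⟨by linarith, by nlinarith [t.2.2]⟩⟩ := by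
  rcases eq_or_lt_of_le ht with heq | hlt
  · rw [Path.trans_apply, dif_pos (le_of_eq heq.symm), Path.trans_apply,
      dif_neg (show ¬ ((⟨2 * (t : ℝ), _⟩ : I) : ℝ) ≤ 1/2 by dsimp; push_neg; linarith)]
    calc q _ = q 1 := path_apply_eq q (by dsimp; linarith)
      _ = r 0 := by rw [q.target, r.source]
      _ = r _ := path_apply_eq r (by dsimp; linarith)
  · rw [Path.trans_apply, dif_neg (by push_neg; exact hlt)]

/-- Transport `pRel` along pointwise equalities. -/
lemma pRel_congr {f f' g g' : C(I, X)} (h : pRel f g)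
    (hf : ∀ t, f t = f' t) (hg : ∀ t, g t = g' t) : pRel f' g' := by
  have e1 : f = f' := ContinuousMap.ext hf
  have e2 : g = g' := ContinuousMap.ext hg
  rw [← e1, ← e2]
  exact h

/-- A path homotopy gives `pRel` on the underlying continuous maps. -/
lemma pRel_of_homotopic {x y : X} {p q : Path x y} (h : p.Homotopic q) :
    pRel p.toContinuousMap q.toContinuousMap := h

/-- For any space `X`, if `M ⊆ Π₁(X)` is open in the CO' (quotient) topology
and `[α] ∈ M`, then there are open neighbourhoods `U ∋ α(1)`, `V ∋ α(0)` with
`N([α],U,V) ⊆ M`; i.e. the CO' topology is coarser than the UC topology. -/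
theorem stmt1 {X : Type*} [TopologicalSpace X] (M : Set (Pi1 X)) (hM : IsOpen M)
    (α : C(I, X)) (hα : pq α ∈ M) :
    ∃ U V : Set X, IsOpen U ∧ IsOpen V ∧ α 1 ∈ U ∧ α 0 ∈ V ∧ Nhd (pq α) U V ⊆ M := by
  classical
  -- the "fattened" representative of `[α]`: constant on `[0,1/4]` and `[1/2,1]`.
  set A : Path (α 0) (α 1) :=
    ((Path.refl (α 0)).trans (toPath α)).trans (Path.refl (α 1)) with hAdef
  have hArel : pRel A.toContinuousMap α := by
    have h1 : A.Homotopic ((Path.refl (α 0)).trans (toPath α)) :=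
      ⟨Path.Homotopy.transRefl _⟩
    have h2 : ((Path.refl (α 0)).trans (toPath α)).Homotopic (toPath α) :=
      ⟨Path.Homotopy.reflTrans _⟩
    exact pRel_of_homotopic (h1.trans h2)
  -- the preimage of `M` is open in the compact-open topology and contains `A`.
  have hopen : IsOpen (pq ⁻¹' M) := hM.preimage continuous_quotient_mk'
  have hAM : A.toContinuousMap ∈ pq ⁻¹' M := by
    have : pq A.toContinuousMap = pq α := Quotient.sound hArel
    simpa [Set.mem_preimage, this] using hα
  -- extract a basic compact-open neighbourhood of `A` inside `pq ⁻¹' M`.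
  have hbasis := TopologicalSpace.isTopologicalBasis_of_subbasis
    (ContinuousMap.compactOpen_eq (X := I) (Y := X))
  obtain ⟨B, hBmem, hAB, hBsub⟩ := hbasis.exists_subset_of_mem_open hAM hopen
  obtain ⟨F, ⟨hFfin, hFsub⟩, rfl⟩ := hBmem
  have hmem : ∀ s ∈ F, ∃ K W, IsCompact K ∧ IsOpen W ∧
      {f : C(I, X) | Set.MapsTo f K W} = s := by
    intro s hs
    rcases hFsub hs with ⟨K, hK, W, hW, rfl⟩
    exact ⟨K, W, hK, hW, rfl⟩
  choose! K W hK hW hKW using hmem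
  have hAmaps : ∀ s ∈ F, Set.MapsTo A.toContinuousMap (K s) (W s) := by
    intro s hs
    have : A.toContinuousMap ∈ s := hAB s hs
    rw [← hKW s hs] at this
    exact this
  -- define the neighbourhoods `U` of `α 1` and `V` of `α 0`.
  refine ⟨⋂ s ∈ F, if (K s ∩ {t : I | 1/2 ≤ (t : ℝ)}).Nonempty then W s else Set.univ,
          ⋂ s ∈ F, if (K s ∩ {t : I | (t : ℝ) ≤ 1/4}).Nonempty then W s else Set.univ,
          ?_, ?_, ?_, ?_, ?_⟩
  · exact hFfin.isOpen_biInter fun s hs => by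
      split_ifs
      · exact hW s hs
      · exact isOpen_univ
  · exact hFfin.isOpen_biInter fun s hs => by
      split_ifs
      · exact hW s hs
      · exact isOpen_univ
  · refine Set.mem_iInter₂.2 fun s hs => ?_
    split_ifs with hne
    · obtain ⟨t, htK, ht⟩ := hne
      have hval : A t = α 1 := by
        rw [hAdef, trans_trans_right _ _ _ _ ht]
        rfl
      have := hAmaps s hs htK
      rwa [show A.toContinuousMap t = α 1 from hval] at this
    · exact Set.mem_univ _
  · refine Set.mem_iInter₂.2 fun s hs => ?_
    split_ifs with hne
    · obtain ⟨t, htK, ht⟩ := hne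
      have hval : A t = α 0 := by
        rw [hAdef, trans_trans_left _ _ _ _ ht]
        rfl
      have := hAmaps s hs htK
      rwa [show A.toContinuousMap t = α 0 from hval] at this
    · exact Set.mem_univ _
  -- the main inclusion.
  rintro b ⟨γ, δ, θ, h₁, h₂, hγ, hδU, hθV, rfl⟩
  have hrel : pRel γ α := Quotient.exact hγ
  have hγ0 : γ 0 = α 0 := hrel.endpts (by simp)
  have hγ1 : γ 1 = α 1 := hrel.endpts (by simp)
  set θp : Path (θ 0) (θ 1) := toPath θ with hθp
  set γp : Path (θ 1) (γ 1) := (toPath γ).cast h₁ rfl with hγp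
  set δp : Path (γ 1) (δ 1) := (toPath δ).cast h₂ rfl with hδp
  set γpα : Path (θ 1) (γ 1) := (toPath α).cast (h₁.trans hγ0) hγ1 with hγpα
  set Pγ : Path (θ 0) (δ 1) := (θp.trans γp).trans δp with hPγ
  set Pα : Path (θ 0) (δ 1) := (θp.trans γpα).trans δp with hPα
  have hf : concat δ (concat γ θ h₁) ((concat_one γ θ h₁).trans h₂) = Pγ.toContinuousMap := rfl
  have hq : γp.Homotopic γpα := hrel
  have hPP : Pγ.Homotopic Pα :=
    Path.Homotopic.hcomp (Path.Homotopic.hcomp (Path.Homotopic.refl θp) hq)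
      (Path.Homotopic.refl δp)
  have hpq : pq (concat δ (concat γ θ h₁) ((concat_one γ θ h₁).trans h₂))
      = pq Pα.toContinuousMap := by
    rw [hf]
    exact Quotient.sound (pRel_of_homotopic hPP)
  rw [hpq]
  apply hBsub
  refine Set.mem_sInter.2 fun s hs => ?_
  rw [← hKW s hs]
  intro t htK
  rcases le_or_gt (t : ℝ) (1/4) with h4 | h4
  · -- initial quarter: value lies in `range θ ⊆ V ⊆ W s`
    have hval : Pα t = θ _ := trans_trans_left θp γpα δp t h4
    have hVs : (⋂ s ∈ F, if (K s ∩ {t : I | (t : ℝ) ≤ 1/4}).Nonempty then W s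
        else Set.univ) ⊆ W s := by
      intro x hx
      have := Set.mem_iInter₂.1 hx s hs
      rwa [if_pos ⟨t, htK, h4⟩] at this
    show Pα.toContinuousMap t ∈ W s
    rw [show Pα.toContinuousMap t = θ _ from hval]
    exact hVs (hθV (Set.mem_range_self _))
  rcases le_or_gt (t : ℝ) (1/2) with h2 | h2
  · -- middle part: the value agrees with that of `A`
    have hval : Pα t = α ⟨4 * (t : ℝ) - 1, ⟨by linarith, by linarith⟩⟩ :=
      trans_trans_mid θp γpα δp t h4.le h2
    have hvalA : A t = α ⟨4 * (t : ℝ) - 1, ⟨by linarith, by linarith⟩⟩ :=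
      trans_trans_mid _ _ _ t h4.le h2
    have hmem := hAmaps s hs htK
    show Pα.toContinuousMap t ∈ W s
    rw [show Pα.toContinuousMap t = _ from hval]
    rwa [show A.toContinuousMap t = _ from hvalA] at hmem
  · -- final part: value lies in `range δ ⊆ U ⊆ W s`
    have hval : Pα t = δ _ := trans_trans_right θp γpα δp t h2.le
    have hUs : (⋂ s ∈ F, if (K s ∩ {t : I | 1/2 ≤ (t : ℝ)}).Nonempty then W s
        else Set.univ) ⊆ W s := by
      intro x hx
      have := Set.mem_iInter₂.1 hx s hs
      rwa [if_pos ⟨t, htK, h2.le⟩] at this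
    show Pα.toContinuousMap t ∈ W s
    rw [show Pα.toContinuousMap t = δ _ from hval]
    exact hUs (hδU (Set.mem_range_self _))

end
end

section
/- Let X be a locally path connected and semilocally simply connected topological space. A subset M ⊆ Π₁(X) is open in the CO' (quotient) topology if and only if for every [α] ∈ M there exist path-connected, relatively inessential open neighbourhoods U of α(1) and V of α(0) in X such that N([α],U,V) ⊆ M. (That is, the CO' topology and the UC topology on Π₁(X) coincide.) -/
open unitInterval

noncomputable section

variable {X : Type*} [TopologicalSpace X]

/-!
Triple concatenation `(δ, θ) ↦ δ ⧠ α ⧠ θ` is continuous, and a compact-open neighbourhood of a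
constant path contains every path with range in a small enough neighbourhood of its value. So if
`M ∋ [α]` is CO'-open, `N([α], U, V) ⊆ M` as soon as `U` and `V` are small, and semilocal simple
connectedness with local path connectedness lets us take them path connected and relatively
inessential.

Conversely, cut `α` at `0 = t 0 ≤ ⋯ ≤ t N = 1` so that `α` maps `[t n, t (n + 1)]` into a
relatively inessential open set `W n`. A path `β` close to `α` maps `[t n, t (n + 1)]` into `W n`
and is joined to `α` at each `t n` by a short path `c n`. Two paths with the same endpoints in a
relatively inessential set are homotopic, so
`β|[t n, t (n + 1)] ≃ c n⁻¹ · α|[t n, t (n + 1)] · c (n + 1)`; these conjugations telescope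
to `β ≃ c 0⁻¹ · α · c N`, that is `[β] ∈ N([α], U, V)`.
-/

open Set Filter Topology

theorem RelInessential.mono {U W : Set X} (hW : RelInessential X W) (hUW : U ⊆ W) :
    RelInessential X U :=
  fun γ hγ hloop => hW γ (hγ.trans hUW) hloop

theorem SemilocSimplyConnected.exists_isOpen_isPathConnected_subset [LocallyPathConnectedSpace X]
    (hX : SemilocSimplyConnected X) {x : X} {W : Set X} (hW : W ∈ 𝓝 x) :
    ∃ U, IsOpen U ∧ IsPathConnected U ∧ RelInessential X U ∧ x ∈ U ∧ U ⊆ W := by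
  obtain ⟨R, hRo, hxR, hR⟩ := hX x
  have hx : x ∈ R ∩ interior W := ⟨hxR, mem_interior_iff_mem_nhds.2 hW⟩
  exact ⟨pathComponentIn (R ∩ interior W) x, (hRo.inter isOpen_interior).pathComponentIn x,
    isPathConnected_pathComponentIn hx,
    hR.mono (pathComponentIn_subset.trans inter_subset_left), mem_pathComponentIn_self hx,
    pathComponentIn_subset.trans (inter_subset_right.trans interior_subset)⟩

theorem ContinuousMap.exists_mem_nhds_forall_range_subset_of_mem_nhds_const
    {Y : Type*} [TopologicalSpace Y] {x : X} {A : Set C(Y, X)}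
    (hA : A ∈ 𝓝 (ContinuousMap.const Y x)) :
    ∃ W ∈ 𝓝 x, ∀ f : C(Y, X), range f ⊆ W → f ∈ A := by
  have key : Tendsto id (comap (fun f : C(Y, X) => range f) (𝓝 x).smallSets)
      (𝓝 (ContinuousMap.const Y x)) := by
    refine ContinuousMap.tendsto_nhds_compactOpen.2 fun K _ U hU hKU => ?_
    rcases K.eq_empty_or_nonempty with rfl | ⟨k, hk⟩
    · exact .of_forall fun _ => mapsTo_empty _ _
    · exact ((eventually_smallSets_subset.2 (hU.mem_nhds (hKU hk))).comap _).mono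
        fun f hf y _ => hf (mem_range_self y)
  obtain ⟨W, hW, hWA⟩ := eventually_smallSets.1 (eventually_comap.1 (key hA))
  exact ⟨W, hW, fun f hf => hWA _ hf f rfl⟩

theorem exists_nhds_forall_trans_trans_mem {α : C(I, X)} {O : Set C(I, X)}
    (hO : O ∈ 𝓝 (((Path.refl (α 0)).trans (toPath α)).trans (Path.refl (α 1))).toContinuousMap) :
    ∃ V ∈ 𝓝 (α 0), ∃ U ∈ 𝓝 (α 1), ∀ {x y : X} (θ : Path x (α 0)) (δ : Path (α 1) y),
      range θ ⊆ V → range δ ⊆ U → ((θ.trans (toPath α)).trans δ).toContinuousMap ∈ O := by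
  let S := {p : C(I, X) × C(I, X) // p.1 1 = α 0 ∧ p.2 0 = α 1}
  let θ : ∀ p : S, Path (p.1.1 0) (α 0) := fun p => (toPath p.1.1).cast rfl p.2.1.symm
  let δ : ∀ p : S, Path (α 1) (p.1.2 1) := fun p => (toPath p.1.2).cast p.2.2.symm rfl
  let F : S → C(I, X) := fun p => (((θ p).trans (toPath α)).trans (δ p)).toContinuousMap
  have hθ : Continuous ↿θ := continuous_eval.comp
    ((continuous_fst.comp (continuous_subtype_val.comp continuous_fst)).prodMk continuous_snd)
  have hδ : Continuous ↿δ := continuous_eval.comp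
    ((continuous_snd.comp (continuous_subtype_val.comp continuous_fst)).prodMk continuous_snd)
  have hF : Continuous F := ContinuousMap.continuous_of_continuous_uncurry _ <|
    Path.trans_continuous_family _ (Path.trans_continuous_family θ hθ (fun _ => toPath α)
      (by fun_prop)) δ hδ
  let p₀ : S := ⟨(ContinuousMap.const I (α 0), ContinuousMap.const I (α 1)), rfl, rfl⟩
  have hp₀ : F ⁻¹' O ∈ 𝓝 p₀ := hF.continuousAt.preimage_mem_nhds hO
  obtain ⟨T, hT, hTO⟩ := mem_comap.1 (nhds_induced Subtype.val p₀ ▸ hp₀)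
  rw [nhds_prod_eq] at hT
  obtain ⟨A, hA, B, hB, hABT⟩ := mem_prod_iff.1 hT
  obtain ⟨V, hV, hVA⟩ := ContinuousMap.exists_mem_nhds_forall_range_subset_of_mem_nhds_const hA
  obtain ⟨U, hU, hUB⟩ := ContinuousMap.exists_mem_nhds_forall_range_subset_of_mem_nhds_const hB
  refine ⟨V, hV, U, hU, fun θ δ hθ hδ => ?_⟩
  exact hTO (a := ⟨(θ.toContinuousMap, δ.toContinuousMap), θ.target, δ.source⟩)
    (hABT ⟨hVA _ hθ, hUB _ hδ⟩)

theorem mem_Nhd_iff {α β : C(I, X)} {U V : Set X} :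
    pq β ∈ Nhd (pq α) U V ↔ ∃ (θ : Path (β 0) (α 0)) (δ : Path (α 1) (β 1)),
      range θ ⊆ V ∧ range δ ⊆ U ∧ (toPath β).Homotopic ((θ.trans (toPath α)).trans δ) := by
  constructor
  · rintro ⟨γ, δ, θ, h₁, h₂, hγ, hδ, hθ, hβ⟩
    have hγα : pRel γ α := Quotient.exact hγ
    have hβ' : pRel β _ := Quotient.exact hβ
    have eβ₀ : β 0 = θ 0 := (hβ'.endpts (by simp)).trans (by simp)
    have eβ₁ : β 1 = δ 1 := (hβ'.endpts (by simp)).trans (by simp)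
    have eγ₀ : γ 0 = α 0 := hγα.endpts (by simp)
    have eγ₁ : γ 1 = α 1 := hγα.endpts (by simp)
    let θ' : Path (β 0) (α 0) := (toPath θ).cast eβ₀ (h₁.trans eγ₀).symm
    let δ' : Path (α 1) (β 1) := (toPath δ).cast (eγ₁.symm.trans h₂) eβ₁
    have hβγ : (toPath β).Homotopic ((θ'.trans ((toPath γ).cast eγ₀.symm eγ₁.symm)).trans δ') :=
      hβ'
    have hγα' : ((toPath γ).cast eγ₀.symm eγ₁.symm).Homotopic (toPath α) := hγα
    exact ⟨θ', δ', hθ, hδ, hβγ.trans (((Path.Homotopic.refl θ').hcomp hγα').hcomp (.refl δ'))⟩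
  · rintro ⟨θ, δ, hθ, hδ, h⟩
    exact ⟨α, δ.toContinuousMap, θ.toContinuousMap, θ.target, δ.source.symm, rfl, hδ, hθ,
      Quotient.sound h⟩

theorem exists_Nhd_subset_of_isOpen [LocallyPathConnectedSpace X] (hX : SemilocSimplyConnected X)
    {M : Set (Pi1 X)} (hM : IsOpen M) {α : C(I, X)} (hα : pq α ∈ M) :
    ∃ U V : Set X, IsOpen U ∧ IsOpen V ∧ IsPathConnected U ∧ IsPathConnected V ∧
      RelInessential X U ∧ RelInessential X V ∧ α 1 ∈ U ∧ α 0 ∈ V ∧ Nhd (pq α) U V ⊆ M := by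
  have hO : pq ⁻¹' M ∈
      𝓝 (((Path.refl (α 0)).trans (toPath α)).trans (Path.refl (α 1))).toContinuousMap := by
    have h : (((Path.refl (α 0)).trans (toPath α)).trans (Path.refl (α 1))).Homotopic
        (toPath α) := (Path.Homotopic.trans_refl _).trans (Path.Homotopic.refl_trans _)
    refine (hM.preimage continuous_quotient_mk').mem_nhds ?_
    show pq _ ∈ M
    rwa [pq, Quotient.sound h]
  obtain ⟨V', hV', U', hU', hO'⟩ := exists_nhds_forall_trans_trans_mem hO
  obtain ⟨U, hUo, hUc, hUr, hαU, hUU'⟩ := hX.exists_isOpen_isPathConnected_subset hU'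
  obtain ⟨V, hVo, hVc, hVr, hαV, hVV'⟩ := hX.exists_isOpen_isPathConnected_subset hV'
  refine ⟨U, V, hUo, hVo, hUc, hVc, hUr, hVr, hαU, hαV, ?_⟩
  intro b hb
  induction b using Quotient.ind with | _ β
  obtain ⟨θ, δ, hθ, hδ, h⟩ := mem_Nhd_iff.1 hb
  have hβ : pq β = pq ((θ.trans (toPath α)).trans δ).toContinuousMap := Quotient.sound h
  change pq β ∈ M
  exact hβ ▸ hO' θ δ (hθ.trans hVV') (hδ.trans hUU')

section Conjugation

open Path.Homotopic.Quotient

variable {a b a' b' : X} {γ : Path a b} {γ' : Path a' b'}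

theorem RelInessential.homotopic {W : Set X} (hW : RelInessential X W) {x y : X}
    {p q : Path x y} (hp : range p ⊆ W) (hq : range q ⊆ W) : p.Homotopic q := by
  have hloop : (p.trans q.symm).Homotopic (Path.refl x) := by
    have h := hW (p.trans q.symm).toContinuousMap
      (by rw [Path.coe_toContinuousMap, Path.trans_range, Path.symm_range]
          exact union_subset hp hq)
      (by simp)
    rwa [Path.coe_toContinuousMap, Path.source] at h
  rw [← Path.Homotopic.Quotient.eq] at hloop ⊢
  rw [mk_trans, mk_symm, mk_refl] at hloop
  calc mk p = ((mk p).trans (mk q).symm).trans (mk q) := by simp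
    _ = mk q := by rw [hloop]; simp

def HomotopicConjOn (γ : Path a b) (γ' : Path a' b') (s₀ s₁ : I) (c₀ : Path (γ s₀) (γ' s₀))
    (c₁ : Path (γ s₁) (γ' s₁)) : Prop :=
  (γ'.subpath s₀ s₁).Homotopic ((c₀.symm.trans (γ.subpath s₀ s₁)).trans c₁)

theorem homotopicConjOn_self (s : I) (c : Path (γ s) (γ' s)) : HomotopicConjOn γ γ' s s c c := by
  rw [HomotopicConjOn, ← Path.Homotopic.Quotient.eq]
  simp [mk_trans, mk_symm, mk_refl]

theorem Path.Homotopic.Quotient.mk_subpath_trans_subpath (γ : Path a b) (s₀ s₁ s₂ : I) :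
    (mk (γ.subpath s₀ s₁)).trans (mk (γ.subpath s₁ s₂)) = mk (γ.subpath s₀ s₂) := by
  rw [← mk_trans, Path.Homotopic.Quotient.eq]
  exact ⟨Path.Homotopy.subpathTransSubpath γ s₀ s₁ s₂⟩

theorem HomotopicConjOn.trans {s₀ s₁ s₂ : I} {c₀ : Path (γ s₀) (γ' s₀)}
    {c₁ : Path (γ s₁) (γ' s₁)} {c₂ : Path (γ s₂) (γ' s₂)}
    (h₀₁ : HomotopicConjOn γ γ' s₀ s₁ c₀ c₁) (h₁₂ : HomotopicConjOn γ γ' s₁ s₂ c₁ c₂) :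
    HomotopicConjOn γ γ' s₀ s₂ c₀ c₂ := by
  rw [HomotopicConjOn, ← Path.Homotopic.Quotient.eq] at *
  simp only [mk_trans, mk_symm] at *
  rw [← mk_subpath_trans_subpath γ' s₀ s₁ s₂, ← mk_subpath_trans_subpath γ s₀ s₁ s₂, h₀₁, h₁₂]
  simp [← trans_assoc (mk c₁)]

theorem RelInessential.homotopicConjOn {W : Set X} (hW : RelInessential X W) {s₀ s₁ : I}
    (hs : s₀ ≤ s₁) {c₀ : Path (γ s₀) (γ' s₀)} {c₁ : Path (γ s₁) (γ' s₁)}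
    (hγ : MapsTo γ (Icc s₀ s₁) W) (hγ' : MapsTo γ' (Icc s₀ s₁) W)
    (hc₀ : range c₀ ⊆ W) (hc₁ : range c₁ ⊆ W) : HomotopicConjOn γ γ' s₀ s₁ c₀ c₁ := by
  refine hW.homotopic (by rw [Path.range_subpath_of_le _ _ _ hs]; exact hγ'.image_subset) ?_
  rw [Path.trans_range, Path.trans_range, Path.symm_range, Path.range_subpath_of_le _ _ _ hs]
  exact union_subset (union_subset hc₀ hγ.image_subset) hc₁

theorem HomotopicConjOn.pq_mem_Nhd {α β : C(I, X)} {U V : Set X} {s₀ s₁ : I} (h₀ : s₀ = 0)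
    (h₁ : s₁ = 1) {c₀ : Path (α s₀) (β s₀)} {c₁ : Path (α s₁) (β s₁)}
    (h : HomotopicConjOn (toPath α) (toPath β) s₀ s₁ c₀ c₁) (hc₀ : range c₀ ⊆ V)
    (hc₁ : range c₁ ⊆ U) : pq β ∈ Nhd (pq α) U V := by
  subst h₀ h₁
  refine mem_Nhd_iff.2 ⟨c₀.symm, c₁, by rwa [Path.symm_range], hc₁, ?_⟩
  unfold HomotopicConjOn at h
  rwa [Path.subpath_zero_one, Path.subpath_zero_one] at h

end Conjugation

theorem eventually_pq_mem_Nhd [LocallyPathConnectedSpace X] (hX : SemilocSimplyConnected X)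
    {α : C(I, X)} {U V : Set X} (hU : IsOpen U) (hV : IsOpen V) (hαU : α 1 ∈ U)
    (hαV : α 0 ∈ V) : ∀ᶠ β in 𝓝 α, pq β ∈ Nhd (pq α) U V := by
  choose R hRo hxR hR using hX
  obtain ⟨t, ht₀, htm, ⟨N, hN⟩, hcover⟩ := exists_monotone_Icc_subset_open_cover_unitInterval
    (c := fun s => α ⁻¹' R (α s)) (fun s => (hRo _).preimage α.continuous)
    (fun s _ => mem_iUnion.2 ⟨s, hxR _⟩)
  choose s hαW using hcover
  set W : ℕ → Set X := fun n => R (α (s n))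
  -- the connecting path at `t n` runs in `E n`; truncated subtraction makes `W (0 - 1) = W 0`
  set E : ℕ → Set X := fun n => W (n - 1) ∩ W n ∩ {x | n = 0 → x ∈ V} ∩ {x | n = N → x ∈ U}
  have hEo : ∀ n, IsOpen (E n) := by
    intro n
    refine (((hRo _).inter (hRo _)).inter ?_).inter ?_
    · rcases eq_or_ne n 0 with rfl | hn <;> simp [*]
    · rcases eq_or_ne n N with rfl | hn <;> simp [*]
  have hαE : ∀ n, α (t n) ∈ E n := by
    intro n
    refine ⟨⟨⟨?_, hαW n ⟨le_rfl, htm n.le_succ⟩⟩, ?_⟩, ?_⟩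
    · cases n with
      | zero => exact hαW 0 ⟨le_rfl, htm (Nat.zero_le 1)⟩
      | succ n => exact hαW n ⟨htm n.le_succ, le_rfl⟩
    · intro h; rwa [h, ht₀]
    · intro h; rwa [h, hN N le_rfl]
  have hev : ∀ᶠ β : C(I, X) in 𝓝 α, ∀ n ∈ Iic N,
      MapsTo β (Icc (t n) (t (n + 1))) (W n) ∧ β (t n) ∈ pathComponentIn (E n) (α (t n)) :=
    (finite_Iic N).eventually_all.2 fun n _ =>
      (ContinuousMap.eventually_mapsTo isCompact_Icc (hRo _) (hαW n)).and
        ((continuous_eval_const (t n)).continuousAt.preimage_mem_nhds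
          (((hEo n).pathComponentIn _).mem_nhds (mem_pathComponentIn_self (hαE n))))
  filter_upwards [hev] with β hβ
  have hJ : ∀ n ≤ N, JoinedIn (E n) (α (t n)) (β (t n)) := fun n hn => (hβ n hn).2
  set c₀ := (hJ 0 (Nat.zero_le N)).somePath
  have key : ∀ n ≤ N, ∃ c : Path (α (t n)) (β (t n)), range c ⊆ E n ∧
      HomotopicConjOn (toPath α) (toPath β) (t 0) (t n) c₀ c := by
    intro n
    induction n with
    | zero => exact fun _ => ⟨c₀, range_subset_iff.2 (JoinedIn.somePath_mem _),
        homotopicConjOn_self _ _⟩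
    | succ n ih =>
      intro hn
      obtain ⟨c, hcE, hc⟩ := ih (by omega)
      refine ⟨(hJ (n + 1) hn).somePath, range_subset_iff.2 (JoinedIn.somePath_mem _), hc.trans ?_⟩
      exact (hR _).homotopicConjOn (htm n.le_succ) (hαW n) (hβ n (mem_Iic.2 (by omega))).1
        (fun _ hx => (hcE hx).1.1.2)
        (range_subset_iff.2 fun r => ((hJ (n + 1) hn).somePath_mem r).1.1.1)
  obtain ⟨c, hcE, hc⟩ := key N le_rfl
  exact hc.pq_mem_Nhd ht₀ (hN N le_rfl)
    (range_subset_iff.2 fun r => ((hJ 0 (Nat.zero_le N)).somePath_mem r).1.2 rfl)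
    (fun _ hx => (hcE hx).2 rfl)

/-- For a locally path connected, semilocally simply connected `X`,
a set `M ⊆ Π₁(X)` is CO'-open iff every `[α] ∈ M` has a basic UC-neighbourhood
`N([α],U,V) ⊆ M` with `U, V` path connected relatively inessential open sets;
i.e. the CO' and UC topologies coincide. -/
theorem stmt2 {X : Type*} [TopologicalSpace X] [LocallyPathConnectedSpace X]
    (hX : SemilocSimplyConnected X) (M : Set (Pi1 X)) :
    IsOpen M ↔ ∀ α : C(I, X), pq α ∈ M →
      ∃ U V : Set X, IsOpen U ∧ IsOpen V ∧ IsPathConnected U ∧ IsPathConnected V ∧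
        RelInessential X U ∧ RelInessential X V ∧ α 1 ∈ U ∧ α 0 ∈ V ∧
        Nhd (pq α) U V ⊆ M := by
  refine ⟨fun hM α hα => exists_Nhd_subset_of_isOpen hX hM hα, fun h => ?_⟩
  refine isQuotientMap_quotient_mk'.isOpen_preimage.1 (isOpen_iff_mem_nhds.2 fun α hα => ?_)
  obtain ⟨U, V, hU, hV, -, -, -, -, hαU, hαV, hNM⟩ := h α hα
  exact (eventually_pq_mem_Nhd hX hU hV hαU hαV).mono fun β hβ => hNM hβ

end
end

section
/- Let X be a locally path connected and simply connected topological space. Then the map φ : Π₁(X) → X × X, [γ] ↦ (γ(1), γ(0)), is a homeomorphism (where Π₁(X) carries the CO' topology); moreover φ sends composition to pair-groupoid composition, i.e. for paths α, β with α(0) = β(1) one has φ([α ⧠ β]) = (α(1), β(0)). -/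
open unitInterval

noncomputable section

variable {X : Type*} [TopologicalSpace X]

/-!
In a simply connected space a path class is determined by its endpoints, so `φ` is a continuous
bijection and it remains to see that it is open. If `[f]` lies in an open `W`, so does
`[c ⧠ f ⧠ c']` with constant paths `c, c'`. Concatenation is continuous and short paths are
close to constant ones in the compact-open topology, so replacing `c, c'` by short paths inside
path-connected neighbourhoods of the endpoints stays in the preimage of `W`; the new endpoints
fill a neighbourhood of `φ [f]`.
-/

open Set Filter Topology

theorem simplyConnectedSpace_of_forall_pRel_const [PathConnectedSpace X]
    (hsc : ∀ γ : C(I, X), γ 1 = γ 0 → pRel γ (ContinuousMap.const I (γ 0))) :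
    SimplyConnectedSpace X :=
  simply_connected_iff_loops_nullhomotopic.2 ⟨inferInstance, fun x γ =>
    (by simpa using hsc γ.toContinuousMap (by simp) : pRel γ.toContinuousMap (.const I x))⟩

theorem pq_eq_pq_of_endpoints_eq [SimplyConnectedSpace X] {f g : C(I, X)} (h0 : f 0 = g 0)
    (h1 : f 1 = g 1) : pq f = pq g :=
  Quotient.sound <| SimplyConnectedSpace.paths_homotopic (toPath f) ((toPath g).cast h0 h1)

theorem Continuous.concat {ι : Type*} [TopologicalSpace ι] {α β : ι → C(I, X)}
    (hα : Continuous α) (hβ : Continuous β) (h : ∀ i, β i 1 = α i 0) :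
    Continuous fun i => concat (α i) (β i) (h i) :=
  ContinuousMap.continuous_of_continuous_uncurry _ <|
    Path.trans_continuous_family (fun i => toPath (β i))
      (continuous_eval.comp (hβ.prodMap continuous_id))
      (fun i => (toPath (α i)).cast (h i) rfl)
      (continuous_eval.comp (hα.prodMap continuous_id))

theorem ContinuousMap.exists_mem_nhds_range_subset_of_mem_nhds_const {Y : Type*}
    [TopologicalSpace Y] {x : X} {N : Set C(Y, X)} (hN : N ∈ 𝓝 (const Y x)) :
    ∃ U ∈ 𝓝 x, {g : C(Y, X) | range g ⊆ U} ⊆ N := by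
  have hmono : Monotone fun U : Set X => {g : C(Y, X) | range g ⊆ U} :=
    fun _ _ hUV _ hg => hg.trans hUV
  suffices (𝓝 x).lift' (fun U => {g : C(Y, X) | range g ⊆ U}) ≤ 𝓝 (const Y x) from
    (mem_lift'_sets hmono).1 (this hN)
  rw [nhds_compactOpen]
  refine le_iInf₂ fun K _ => le_iInf₂ fun U hU => le_iInf fun hKU => le_principal_iff.2 ?_
  rcases K.eq_empty_or_nonempty with rfl | ⟨t, ht⟩
  · simp only [mapsTo_empty, ofPred_true, univ_mem]
  · exact mem_of_superset (mem_lift' (hU.mem_nhds (hKU ht)))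
      fun g hg => (mapsTo_range g K).mono_right hg

def padEnds (f : C(I, X)) : C(I, X) :=
  concat (.const I (f 1)) (concat f (.const I (f 0)) (ContinuousMap.const_apply _ _))
    ((concat_one _ _ _).trans (ContinuousMap.const_apply _ _).symm)

theorem eventually_exists_mem_endpoints_eq_of_mem_nhds_padEnds [LocallyPathConnectedSpace X]
    (f : C(I, X)) {O : Set C(I, X)} (hO : O ∈ 𝓝 (padEnds f)) :
    ∀ᶠ z in 𝓝 (f 1, f 0), ∃ g ∈ O, g 1 = z.1 ∧ g 0 = z.2 := by
  let T : {p : C(I, X) × C(I, X) // p.2 1 = f 0 ∧ f 1 = p.1 0} → C(I, X) := fun p =>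
    concat p.1.1 (concat f p.1.2 p.2.1) ((concat_one _ _ _).trans p.2.2)
  have hT : Continuous T :=
    (continuous_fst.comp continuous_subtype_val).concat
      (continuous_const.concat (continuous_snd.comp continuous_subtype_val) _) _
  have hTO : T ⁻¹' O ∈ 𝓝 ⟨(.const I (f 1), .const I (f 0)), rfl, rfl⟩ := hT.continuousAt hO
  obtain ⟨N, hN, hsub⟩ := (mem_nhds_subtype _ _ _).1 hTO
  obtain ⟨P, hP, R, hR, hPR⟩ := mem_nhds_prod_iff.1 hN
  obtain ⟨U, hU, hUP⟩ := ContinuousMap.exists_mem_nhds_range_subset_of_mem_nhds_const hP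
  obtain ⟨V, hV, hVR⟩ := ContinuousMap.exists_mem_nhds_range_subset_of_mem_nhds_const hR
  filter_upwards [prod_mem_nhds (pathComponentIn_mem_nhds hU) (pathComponentIn_mem_nhds hV)]
    with ⟨x, y⟩ ⟨hx, hy⟩
  let p : Path (f 1) x := JoinedIn.somePath hx
  let r : Path y (f 0) := (JoinedIn.somePath hy).symm
  have hpr : (p.toContinuousMap, r.toContinuousMap) ∈ P ×ˢ R :=
    ⟨hUP (range_subset_iff.2 (JoinedIn.somePath_mem hx)),
      hVR (range_subset_iff.2 fun t => JoinedIn.somePath_mem hy _)⟩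
  refine ⟨T ⟨(p.toContinuousMap, r.toContinuousMap), r.target, p.source.symm⟩, hsub (hPR hpr),
    ?_, ?_⟩
  all_goals simp [T, p, r]

def endpts (a : Pi1 X) : X × X := (rngMap a, srcMap a)

theorem continuous_endpts : Continuous (endpts : Pi1 X → X × X) :=
  ((continuous_eval_const 1).quotient_lift _).prodMk ((continuous_eval_const 0).quotient_lift _)

theorem endpts_surjective [PathConnectedSpace X] : (endpts : Pi1 X → X × X).Surjective :=
  fun z => ⟨pq (PathConnectedSpace.somePath z.2 z.1).toContinuousMap,
    Prod.ext (Path.target _) (Path.source _)⟩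

theorem endpts_injective [SimplyConnectedSpace X] : (endpts : Pi1 X → X × X).Injective := by
  rintro ⟨f⟩ ⟨g⟩ h
  obtain ⟨h1, h0⟩ := Prod.ext_iff.1 h
  exact pq_eq_pq_of_endpoints_eq h0 h1

theorem isOpenMap_endpts [LocallyPathConnectedSpace X] [SimplyConnectedSpace X] :
    IsOpenMap (endpts : Pi1 X → X × X) := by
  refine fun W hW => isOpen_iff_mem_nhds.2 ?_
  rintro _ ⟨a, ha, rfl⟩
  obtain ⟨f, rfl⟩ : ∃ f, pq f = a := Quotient.exists_rep a
  have hO : pq ⁻¹' W ∈ 𝓝 (padEnds f) := by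
    refine (hW.preimage (continuous_quotient_mk' : Continuous (pq (X := X)))).mem_nhds ?_
    show pq _ ∈ W
    rwa [pq_eq_pq_of_endpoints_eq (g := f) (by simp [padEnds]) (by simp [padEnds])]
  filter_upwards [eventually_exists_mem_endpoints_eq_of_mem_nhds_padEnds f hO]
    with z ⟨g, hgW, hg1, hg0⟩
  exact ⟨pq g, hgW, Prod.ext hg1 hg0⟩

/-- For a locally path connected and simply connected `X` (path connected with
every loop null-homotopic), the map `φ : Π₁(X) → X × X`, `[γ] ↦ (γ(1), γ(0))`, is a
homeomorphism sending composition to the pair-groupoid composition: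
`φ([α ⧠ β]) = (α(1), β(0))`. -/
theorem stmt10 {X : Type*} [TopologicalSpace X] [LocallyPathConnectedSpace X]
    [PathConnectedSpace X]
    (hsc : ∀ γ : C(I, X), γ 1 = γ 0 → pRel γ (ContinuousMap.const I (γ 0))) :
    ∃ e : Pi1 X ≃ₜ X × X,
      (∀ γ : C(I, X), e (pq γ) = (γ 1, γ 0)) ∧
      ∀ (α β : C(I, X)) (h : β 1 = α 0), e (pq (concat α β h)) = (α 1, β 0) := by
  have := simplyConnectedSpace_of_forall_pRel_const hsc
  have hbij : (endpts : Pi1 X → X × X).Bijective := ⟨endpts_injective, endpts_surjective⟩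
  exact ⟨(Equiv.ofBijective _ hbij).toHomeomorphOfContinuousOpen continuous_endpts
    isOpenMap_endpts, fun γ => rfl, fun α β h => Prod.ext (concat_one α β h) (concat_zero α β h)⟩

end
end

section
/- Let G be a path connected, locally path connected and semilocally simply connected topological group with identity 1. Let H = {a ∈ Π₁(G) : s(a) = 1} ⊆ Π₁(G) denote the subspace of path-homotopy classes of paths starting at 1, with the subspace topology of the CO' topology. Then the map J : H × G → Π₁(G), ([γ], g) ↦ [γ·g] (where γ·g is the translated path t ↦ γ(t)·g), is a homeomorphism, with inverse a ↦ (a·(s(a))⁻¹, s(a)). -/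
open unitInterval

noncomputable section

variable {X : Type*} [TopologicalSpace X]

/-!
Pointwise multiplication of paths in a topological group `G` respects path homotopy, so right
translation `[γ] ↦ [γ·g]` is well defined on `Π₁(G)`, with inverse translation by `g⁻¹`. The
quotient map `P(G) → Π₁(G)` is open: the saturation of an open set `U` is the union of the
translates `U·ν` over all loops `ν` at `1` that are null-homotopic rel endpoints, since
`γ ∼ δ` exactly when `δ⁻¹·γ ∼ 1`. Hence `P(G) × G → Π₁(G) × G` is again a quotient map, which
makes `(a, g) ↦ a·g` continuous on `Π₁(G) × G`; both `J` and `a ↦ (a·s(a)⁻¹, s(a))` are built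
from this map and the continuous source map.
-/

theorem pRel.refl (f : C(I, X)) : pRel f f := ContinuousMap.HomotopicRel.refl f

theorem continuous_pq : Continuous (pq : C(I, X) → Pi1 X) := continuous_quotient_mk'

theorem continuous_srcMap : Continuous (srcMap : Pi1 X → X) :=
  Continuous.quotient_lift (continuous_eval_const 0) _

theorem pRel.mul {M : Type*} [TopologicalSpace M] [Mul M] [ContinuousMul M]
    {f g f' g' : C(I, M)} (h : pRel f g) (h' : pRel f' g') : pRel (f * f') (g * g') := by
  obtain ⟨H⟩ := h
  obtain ⟨H'⟩ := h'
  refine ⟨{ toFun := fun p => H p * H' p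
            continuous_toFun := H.continuous.mul H'.continuous
            map_zero_left := fun x => by simp
            map_one_left := fun x => by simp
            prop' := fun t x hx => ?_ }⟩
  simp only [ContinuousMap.coe_mk, ContinuousMap.mul_apply, H.eq_fst t hx, H'.eq_fst t hx]

section TopologicalGroup

variable {G : Type*} [TopologicalSpace G] [Group G] [IsTopologicalGroup G]

theorem pq_eq_pq_iff_pRel_inv_mul {γ δ : C(I, G)} : pq γ = pq δ ↔ pRel (δ⁻¹ * γ) 1 := by
  constructor
  · intro h
    have h' := (pRel.refl δ⁻¹).mul (Quotient.exact h : pRel γ δ)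
    rwa [inv_mul_cancel] at h'
  · intro h
    have h' := (pRel.refl δ).mul h
    rw [mul_inv_cancel_left, mul_one] at h'
    exact Quotient.sound h'

theorem isOpenMap_pq : IsOpenMap (pq : C(I, G) → Pi1 G) := by
  intro U hU
  have saturation : pq ⁻¹' (pq '' U) = ⋃ ν : { ν : C(I, G) // pRel ν 1 }, (· * ν.1) '' U := by
    ext γ
    simp only [Set.mem_preimage, Set.mem_image, Set.mem_iUnion]
    constructor
    · rintro ⟨δ, hδU, hδγ⟩
      exact ⟨⟨δ⁻¹ * γ, pq_eq_pq_iff_pRel_inv_mul.mp hδγ.symm⟩, δ, hδU, by simp⟩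
    · rintro ⟨⟨ν, hν⟩, δ, hδU, rfl⟩
      exact ⟨δ, hδU, (pq_eq_pq_iff_pRel_inv_mul.mpr (by simpa using hν)).symm⟩
  refine isQuotientMap_quotient_mk'.isOpen_preimage.mp ?_
  change IsOpen (pq ⁻¹' (pq '' U))
  rw [saturation]
  exact isOpen_iUnion fun ν => isOpenMap_mul_right ν.1 U hU

theorem isOpenQuotientMap_pq : IsOpenQuotientMap (pq : C(I, G) → Pi1 G) :=
  ⟨Quotient.mk_surjective, continuous_pq, isOpenMap_pq⟩

def Pi1.rmul (a : Pi1 G) (g : G) : Pi1 G :=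
  Quotient.map (· * ContinuousMap.const I g) (fun _ _ h => pRel.mul h (pRel.refl _)) a

theorem Pi1.rmul_rmul (a : Pi1 G) (g h : G) : Pi1.rmul (Pi1.rmul a g) h = Pi1.rmul a (g * h) := by
  induction a using Quotient.inductionOn with
  | h γ => exact congrArg pq (ContinuousMap.ext fun t => by simp [mul_assoc])

theorem Pi1.rmul_one (a : Pi1 G) : Pi1.rmul a 1 = a := by
  induction a using Quotient.inductionOn with
  | h γ => exact congrArg pq (ContinuousMap.ext fun t => by simp)

theorem srcMap_rmul (a : Pi1 G) (g : G) : srcMap (Pi1.rmul a g) = srcMap a * g := by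
  induction a using Quotient.inductionOn with
  | h γ => rfl

theorem continuous_rmul : Continuous fun p : Pi1 G × G => Pi1.rmul p.1 p.2 := by
  rw [← (isOpenQuotientMap_pq.prodMap IsOpenQuotientMap.id).continuous_comp_iff]
  exact continuous_pq.comp
    (continuous_fst.mul (ContinuousMap.continuous_const'.comp continuous_snd))

/-- The map `J : H × G → Π₁(G)`, `([γ], g) ↦ [γ·g]`. -/
def Pi1.srcOneProdHomeomorph : ({ a : Pi1 G // srcMap a = 1 } × G) ≃ₜ Pi1 G where
  toFun p := Pi1.rmul p.1.1 p.2
  invFun a := (⟨Pi1.rmul a (srcMap a)⁻¹, (srcMap_rmul a _).trans (mul_inv_cancel _)⟩, srcMap a)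
  left_inv := by
    rintro ⟨⟨a, ha⟩, g⟩
    ext <;> simp [srcMap_rmul, ha, Pi1.rmul_rmul, Pi1.rmul_one]
  right_inv a := by simp [Pi1.rmul_rmul, Pi1.rmul_one]
  continuous_toFun := continuous_rmul.comp
    ((continuous_subtype_val.comp continuous_fst).prodMk continuous_snd)
  continuous_invFun :=
    ((continuous_rmul.comp (continuous_id.prodMk continuous_srcMap.inv)).subtype_mk _).prodMk
      continuous_srcMap

end TopologicalGroup

/-- For a path connected, locally path connected, semilocally simply connected
topological group `G`, with `H = {a ∈ Π₁(G) : s(a) = 1}` (the universal cover, with the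
subspace topology), the map `J : H × G → Π₁(G)`, `([γ], g) ↦ [γ·g]`, is a homeomorphism
with inverse `a ↦ (a·(s a)⁻¹, s a)`. -/
theorem stmt13 {G : Type*} [TopologicalSpace G] [Group G] [IsTopologicalGroup G] :
    ∃ e : ({ a : Pi1 G // srcMap a = 1 } × G) ≃ₜ Pi1 G,
      (∀ (γ : C(I, G)) (hγ : srcMap (pq γ) = 1) (g : G),
        e (⟨pq γ, hγ⟩, g) = pq (γ * ContinuousMap.const I g)) ∧
      ∀ γ : C(I, G),
        e.symm (pq γ) =
          (⟨pq (γ * ContinuousMap.const I (γ 0)⁻¹),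
              show (γ * ContinuousMap.const I (γ 0)⁻¹) 0 = 1 by simp⟩, γ 0) :=
  ⟨Pi1.srcOneProdHomeomorph, fun _ _ _ => rfl, fun _ => rfl⟩

end
end

section
/- Let G be a discrete group acting freely by homeomorphisms on a topological space X. Assume: (i) the action is a covering space action, i.e. every point p ∈ X has a neighbourhood U such that (g·U) ∩ U = ∅ for every g ∈ G with g ≠ 1; and (ii) the action satisfies the Hausdorff criterion, i.e. for any points p, q ∈ X lying in different G-orbits there exist neighbourhoods V of p and W of q such that (g·V) ∩ W = ∅ for all g ∈ G. Then the action is proper: for every pair of compact subsets K, L ⊆ X, the set {g ∈ G : (g·K) ∩ L ≠ ∅} is finite. -/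
/-- Let a discrete group `G` act freely by homeomorphisms on a space `X`.
If the action is a covering space action (every point has a neighbourhood `U` with
`gU ∩ U = ∅` for all `g ≠ 1`) and satisfies the Hausdorff criterion (points in different
orbits can be separated by neighbourhoods `V`, `W` with `gV ∩ W = ∅` for all `g`), then the
action is proper: for all compact `K, L ⊆ X`, the set `{g : gK ∩ L ≠ ∅}` is finite. -/
theorem stmt18 {G X : Type*} [Group G] [TopologicalSpace X] [MulAction G X]
    (hcont : ∀ g : G, Continuous fun x : X => g • x)
    (hfree : ∀ (g : G) (x : X), g • x = x → g = 1)
    (hcov : ∀ p : X, ∃ U ∈ nhds p, ∀ g : G, g ≠ 1 → ((g • ·) '' U) ∩ U = ∅)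
    (hhaus : ∀ p q : X, (∀ g : G, g • p ≠ q) →
      ∃ V ∈ nhds p, ∃ W ∈ nhds q, ∀ g : G, ((g • ·) '' V) ∩ W = ∅)
    (K L : Set X) (hK : IsCompact K) (hL : IsCompact L) :
    Set.Finite { g : G | ((g • ·) '' K) ∩ L ≠ ∅ } := by
  classical
  haveI : ContinuousConstSMul G X := ⟨hcont⟩
  -- Key pointwise lemma
  have key : ∀ x y : X, ∃ V ∈ nhds x, ∃ W ∈ nhds y, ∃ F : Finset G,
      ∀ g : G, (((g • ·) '' V) ∩ W) ≠ ∅ → g ∈ F := by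
    intro x y
    by_cases horb : ∃ h : G, h • x = y
    · obtain ⟨h, hh⟩ := horb
      obtain ⟨U, hU, hUdisj⟩ := hcov x
      refine ⟨U, hU, (h • ·) '' U, ?_, {h}, ?_⟩
      · have := (Homeomorph.smul h (α := X)).isOpenMap.image_mem_nhds hU
        simpa [hh] using this
      · intro g hg
        rw [← Set.nonempty_iff_ne_empty] at hg
        obtain ⟨z, ⟨u, hu, rfl⟩, ⟨u', hu', hzu'⟩⟩ := hg
        have hzu'' : h • u' = g • u := hzu'
        have heq : (h⁻¹ * g) • u = u' := by
          rw [mul_smul, ← hzu'', inv_smul_smul]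
        have hmem : u' ∈ (((h⁻¹ * g) • ·) '' U) ∩ U := ⟨⟨u, hu, heq⟩, hu'⟩
        have : h⁻¹ * g = 1 := by
          by_contra hne
          rw [hUdisj _ hne] at hmem
          exact hmem
        have : g = h := by
          have := congrArg (h * ·) this
          simpa [mul_assoc] using this
        simp [this]
    · push_neg at horb
      obtain ⟨V, hV, W, hW, hdisj⟩ := hhaus x y horb
      exact ⟨V, hV, W, hW, ∅, fun g hg => absurd (hdisj g) hg⟩
  choose V hV W hW F hF using key
  -- For each x, a neighbourhood controlling intersections with all of L
  have key2 : ∀ x : X, ∃ V' ∈ nhds x, ∃ F' : Finset G,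
      ∀ g : G, (((g • ·) '' V') ∩ L) ≠ ∅ → g ∈ F' := by
    intro x
    obtain ⟨t, -, ht⟩ := hL.elim_nhds_subcover (W x) (fun y _ => hW x y)
    refine ⟨⋂ y ∈ t, V x y, ?_, t.biUnion (fun y => F x y), ?_⟩
    · exact (Filter.biInter_finset_mem t).mpr (fun y _ => hV x y)
    · intro g hg
      rw [← Set.nonempty_iff_ne_empty] at hg
      obtain ⟨z, ⟨v, hv, rfl⟩, hzL⟩ := hg
      obtain ⟨y, hyt, hzy⟩ := by
        have := ht hzL
        simpa using this
      refine Finset.mem_biUnion.mpr ⟨y, hyt, hF x y g ?_⟩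
      rw [← Set.nonempty_iff_ne_empty]
      exact ⟨g • v, ⟨v, by simpa using Set.mem_iInter₂.mp hv y hyt, rfl⟩, hzy⟩
  choose V' hV' F' hF' using key2
  obtain ⟨s, -, hs⟩ := hK.elim_nhds_subcover V' (fun x _ => hV' x)
  apply Set.Finite.subset (s.biUnion F').finite_toSet
  intro g hg
  rw [Set.mem_setOf_eq, ← Set.nonempty_iff_ne_empty] at hg
  obtain ⟨z, ⟨k, hk, rfl⟩, hzL⟩ := hg
  obtain ⟨x, hxs, hkx⟩ := by
    have := hs hk
    simpa using this
  refine Finset.mem_coe.mpr (Finset.mem_biUnion.mpr ⟨x, hxs, hF' x g ?_⟩)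
  rw [← Set.nonempty_iff_ne_empty]
  exact ⟨g • k, ⟨k, hkx, rfl⟩, hzL⟩
end
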